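/- Let F : C ⟶ D be a J-full and J-faithful functor. Then F, regarded as a functor (C, J) ⟶ (D, J^F) where J^F is the topology coinduced by J along F, is cover-reflecting: if the image F(R) of a sieve R on c generates a J^F-covering sieve, then R is J-covering. -/

import Mathlib

open CategoryTheory

universe v₁ v₂ u₁ u₂

namespace Stmt10

variable {C : Type u₁} {D : Type u₂} [Category.{v₁} C] [Category.{v₂} D]

/-- The sieve on `x` of arrows `f` such that `F(f) ≫ g` comes from an arrow of `C`. -/
def liftSieve (F : C ⥤ D) {x y : C} (g : F.obj x ⟶ F.obj y) : Sieve x where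
  arrows _ f := ∃ g' : _ ⟶ y, F.map f ≫ g = F.map g'
  downward_closed := by
    rintro x' x'' f ⟨g', hg'⟩ h
    exact ⟨h ≫ g', by simp only [Functor.map_comp, Category.assoc, hg']⟩

/-- The sieve of arrows equalizing two parallel arrows `h, k`. -/
def equalizingSieve {x y : C} (h k : x ⟶ y) : Sieve x where
  arrows _ f := f ≫ h = f ≫ k
  downward_closed := by
    intro x' x'' f hf g
    simp only [Category.assoc, hf]

/-- `F` is `J`-full. -/
def JFull (F : C ⥤ D) (J : GrothendieckTopology C) : Prop :=
  ∀ {x y : C} (g : F.obj x ⟶ F.obj y), liftSieve F g ∈ J x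

/-- `F` is `J`-faithful. -/
def JFaithful (F : C ⥤ D) (J : GrothendieckTopology C) : Prop :=
  ∀ {x y : C} (h k : x ⟶ y), F.map h = F.map k → equalizingSieve h k ∈ J x

/-- A sieve `T` on `d : D` is covering for the topology coinduced by `J` along `F` if for
every object `c` of `C` and arrow `ξ : F(c) ⟶ d` there is a `J`-covering sieve `R` on `c`
with `F(R) ⊆ ξ*(T)`. -/
def CoinducedCovers (F : C ⥤ D) (J : GrothendieckTopology C) {d : D} (T : Sieve d) : Prop :=
  ∀ (c : C) (ξ : F.obj c ⟶ d),
    ∃ R ∈ J c, ∀ ⦃c' : C⦄ (f : c' ⟶ c), R.arrows f → T.arrows (F.map f ≫ ξ)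

section

variable {F : C ⥤ D} {J : GrothendieckTopology C}

theorem pullback_mem_of_map_eq_map (hfaithful : JFaithful F J) {x y : C} {R : Sieve y}
    {f g : x ⟶ y} (hfg : F.map f = F.map g) (hg : R.arrows g) : R.pullback f ∈ J x :=
  J.superset_covering (fun _ k (hk : k ≫ f = k ≫ g) => by
    simpa only [Sieve.pullback_apply, hk] using R.downward_closed hg k) (hfaithful f g hfg)

/-- On the `J`-covering sieve `liftSieve F h`, `h` becomes the image of an arrow of `C`, so
`J`-faithfulness applies. -/
theorem pullback_mem_of_map_eq_comp_map (hfull : JFull F J) (hfaithful : JFaithful F J)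
    {x y z : C} {R : Sieve y} {f : x ⟶ y} {g : z ⟶ y} (h : F.obj x ⟶ F.obj z)
    (hfg : F.map f = h ≫ F.map g) (hg : R.arrows g) : R.pullback f ∈ J x := by
  refine J.transitive (hfull h) _ fun _ f' ⟨h', hh'⟩ => ?_
  have hmap : F.map (f' ≫ f) = F.map (h' ≫ g) := by
    rw [F.map_comp, hfg, ← Category.assoc, hh', F.map_comp]
  rw [← Sieve.pullback_comp]
  exact pullback_mem_of_map_eq_map hfaithful hmap (R.downward_closed hg h')

end

/-- Lemma 5.25(ii): a `J`-full and `J`-faithful functor `F : C ⥤ D`, regarded as a functor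
`(C, J) ⟶ (D, J^F)` to `D` with the topology coinduced by `J` along `F`, is cover-reflecting:
if the image `F(R)` of a sieve `R` on `c` generates a `J^F`-covering sieve, then `R` is
`J`-covering. -/
theorem coverReflecting_of_JFull_JFaithful (F : C ⥤ D) (J : GrothendieckTopology C)
    (hfull : JFull F J) (hfaithful : JFaithful F J) :
    ∀ (c : C) (R : Sieve c), CoinducedCovers F J (Sieve.functorPushforward F R) → R ∈ J c := by
  intro c R hR
  -- Testing the coinduced cover at `ξ = 𝟙 (F c)` yields a `J`-cover `S` of `c` whose arrows
  -- have images factoring through `F(R)`; it remains to check `R` locally on `S`.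
  obtain ⟨S, hS, hSR⟩ := hR c (𝟙 _)
  refine J.transitive hS R fun _ f hf => ?_
  obtain ⟨_, g, h, hg, hfg⟩ := hSR f hf
  rw [Category.comp_id] at hfg
  exact pullback_mem_of_map_eq_comp_map hfull hfaithful h hfg hg

end Stmt10
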